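/- Let λ_c := inf{λ > 0 : the system (S_λ) admits a solution} (a nonempty set). Then for every λ > λ_c the system (S_λ) admits a unique maximal solution (u_λ, v_λ): it solves (S_λ) and every solution (u', v') of (S_λ) with (u', v') ≠ (u_λ, v_λ) satisfies u'(x) < u_λ(x) and v'(x) < v_λ(x) for all x ∈ V. -/
import Mathlib


open Real Finset

/-- The μ-Laplacian on a finite weighted graph. -/
noncomputable def graphLap {V : Type*} [Fintype V] (ω : V → V → ℝ) (μ : V → ℝ)
    (f : V → ℝ) (x : V) : ℝ :=
  (1 / μ x) * ∑ y, ω x y * (f y - f x)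

/-- The integral of `f` over `V` with respect to the measure `μ`. -/
noncomputable def graphInt {V : Type*} [Fintype V] (μ : V → ℝ) (f : V → ℝ) : ℝ :=
  ∑ x, μ x * f x

/-- The total volume `|V|` of the graph. -/
noncomputable def graphVol {V : Type*} [Fintype V] (μ : V → ℝ) : ℝ :=
  ∑ x, μ x

/-- The Dirac delta mass at vertex `p`. -/
noncomputable def diracDelta {V : Type*} [DecidableEq V] (μ : V → ℝ) (p x : V) : ℝ :=
  if x = p then 1 / μ p else 0

/-- `primFun F t = ∫_{√t}^{1} 2 s F(s²) ds`; this gives `g` from `G` and `h` from `H`. -/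
noncomputable def primFun (F : ℝ → ℝ) (t : ℝ) : ℝ :=
  ∫ s in Real.sqrt t..(1 : ℝ), 2 * s * F (s ^ 2)

/-- The pointwise squared gradient `|∇ f|²(x)`. -/
noncomputable def gradSq {V : Type*} [Fintype V] (ω : V → V → ℝ) (μ : V → ℝ)
    (f : V → ℝ) (x : V) : ℝ :=
  (1 / (2 * μ x)) * ∑ y, ω x y * (f y - f x) ^ 2

/-- The gradient norm `‖∇ f‖₂ = (∫_V |∇ f|² dμ)^{1/2}`. -/
noncomputable def gradNorm {V : Type*} [Fintype V] (ω : V → V → ℝ) (μ : V → ℝ)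
    (f : V → ℝ) : ℝ :=
  Real.sqrt (graphInt μ (gradSq ω μ f))

/-- The mean value `f̄ = (1/|V|) ∫_V f dμ`. -/
noncomputable def graphAvg {V : Type*} [Fintype V] (μ : V → ℝ) (f : V → ℝ) : ℝ :=
  (1 / graphVol μ) * graphInt μ f

/-- The `W^{1,2}(V)` norm, `(∫_V (|∇ f|² + f²) dμ)^{1/2}`. -/
noncomputable def sobolevNorm {V : Type*} [Fintype V] (ω : V → V → ℝ) (μ : V → ℝ)
    (f : V → ℝ) : ℝ :=
  Real.sqrt (graphInt μ (fun x => gradSq ω μ f x + f x ^ 2))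

/-- `(u, v)` is a solution of the system `(S_λ)`. -/
def isSolution {V : Type*} [Fintype V] (ω : V → V → ℝ) (μ : V → ℝ)
    (G H : ℝ → ℝ) (N1 N2 : ℕ) (u₀ v₀ : V → ℝ) (lam : ℝ) (u v : V → ℝ) : Prop :=
  ∀ x, graphLap ω μ u x =
      -lam * Real.exp (v₀ x + v x) * H (Real.exp (v₀ x + v x)) *
        primFun G (Real.exp (u₀ x + u x)) + 4 * Real.pi * N1 / graphVol μ ∧
    graphLap ω μ v x =
      -lam * Real.exp (u₀ x + u x) * G (Real.exp (u₀ x + u x)) *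
        primFun H (Real.exp (v₀ x + v x)) + 4 * Real.pi * N2 / graphVol μ

/-- `(u, v)` is a lower solution of the system `(S_λ)`. -/
def isLowerSolution {V : Type*} [Fintype V] (ω : V → V → ℝ) (μ : V → ℝ)
    (G H : ℝ → ℝ) (N1 N2 : ℕ) (u₀ v₀ : V → ℝ) (lam : ℝ) (u v : V → ℝ) : Prop :=
  ∀ x, graphLap ω μ u x ≥
      -lam * Real.exp (v₀ x + v x) * H (Real.exp (v₀ x + v x)) *
        primFun G (Real.exp (u₀ x + u x)) + 4 * Real.pi * N1 / graphVol μ ∧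
    graphLap ω μ v x ≥
      -lam * Real.exp (u₀ x + u x) * G (Real.exp (u₀ x + u x)) *
        primFun H (Real.exp (v₀ x + v x)) + 4 * Real.pi * N2 / graphVol μ

/-- `(uM, vM)` is a maximal solution of `(S_λ)`: it solves the system and any other
solution lies strictly below it. -/
def isMaximalSolution {V : Type*} [Fintype V] (ω : V → V → ℝ) (μ : V → ℝ)
    (G H : ℝ → ℝ) (N1 N2 : ℕ) (u₀ v₀ : V → ℝ) (lam : ℝ) (uM vM : V → ℝ) : Prop :=
  isSolution ω μ G H N1 N2 u₀ v₀ lam uM vM ∧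
    ∀ u' v', isSolution ω μ G H N1 N2 u₀ v₀ lam u' v' → (u', v') ≠ (uM, vM) →
      ∀ x, u' x < uM x ∧ v' x < vM x

section GraphLemmas

variable {V : Type*} [Fintype V] (ω : V → V → ℝ) (μ : V → ℝ)

lemma graphLap_sub (f g : V → ℝ) (x : V) :
    graphLap ω μ (f - g) x = graphLap ω μ f x - graphLap ω μ g x := by
  simp only [graphLap, Pi.sub_apply]
  rw [← mul_sub, ← Finset.sum_sub_distrib]
  congr 1
  apply Finset.sum_congr rfl
  intro y _
  ring

lemma graphLap_le_zero_at_max (hω : ∀ x y, 0 ≤ ω x y) (hμ : ∀ x, 0 < μ x)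
    (f : V → ℝ) (x0 : V) (hmax : ∀ y, f y ≤ f x0) :
    graphLap ω μ f x0 ≤ 0 := by
  unfold graphLap
  apply mul_nonpos_of_nonneg_of_nonpos
  · have := hμ x0; positivity
  · apply Finset.sum_nonpos
    intro y _
    exact mul_nonpos_of_nonneg_of_nonpos (hω x0 y) (by linarith [hmax y])

/-- Comparison principle: if `(Δ - K) w ≥ 0` then `w ≤ 0`. -/
lemma comparison (hω : ∀ x y, 0 ≤ ω x y) (hμ : ∀ x, 0 < μ x) [Nonempty V]
    {K : ℝ} (hK : 0 < K) (w : V → ℝ)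
    (h : ∀ x, 0 ≤ graphLap ω μ w x - K * w x) : ∀ x, w x ≤ 0 := by
  obtain ⟨x0, hx0⟩ := Finite.exists_max w
  have h1 : graphLap ω μ w x0 ≤ 0 := graphLap_le_zero_at_max ω μ hω hμ w x0 hx0
  have h2 := h x0
  have hw0 : w x0 ≤ 0 := by nlinarith
  intro x
  exact le_trans (hx0 x) hw0

/-- Solvability of `(Δ - K) w = f` for `K > 0`. -/
lemma solveLin (hω : ∀ x y, 0 ≤ ω x y) (hμ : ∀ x, 0 < μ x) [Nonempty V]
    {K : ℝ} (hK : 0 < K) (f : V → ℝ) :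
    ∃ w : V → ℝ, ∀ x, graphLap ω μ w x - K * w x = f x := by
  classical
  let L : (V → ℝ) →ₗ[ℝ] (V → ℝ) :=
    { toFun := fun w x => graphLap ω μ w x - K * w x
      map_add' := by
        intro a b
        funext x
        simp only [graphLap, Pi.add_apply]
        rw [show (∑ y, ω x y * (a y + b y - (a x + b x)))
          = (∑ y, ω x y * (a y - a x)) + (∑ y, ω x y * (b y - b x)) by
            rw [← Finset.sum_add_distrib]; apply Finset.sum_congr rfl; intros; ring]
        ring
      map_smul' := by
        intro c a
        funext x
        simp only [graphLap, Pi.smul_apply, smul_eq_mul, RingHom.id_apply]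
        rw [show (∑ y, ω x y * (c * a y - c * a x)) = c * (∑ y, ω x y * (a y - a x)) by
            rw [Finset.mul_sum]; apply Finset.sum_congr rfl; intros; ring]
        ring }
  have hinj : Function.Injective L := by
    intro a b hab
    have h0 : ∀ x, graphLap ω μ (a - b) x - K * (a - b) x = 0 := by
      intro x
      have := congrFun hab x
      simp only [L, LinearMap.coe_mk, AddHom.coe_mk] at this
      rw [graphLap_sub]
      simp only [Pi.sub_apply]
      linarith [this]
    have hle : ∀ x, (a - b) x ≤ 0 :=
      comparison ω μ hω hμ hK _ (fun x => le_of_eq (h0 x).symm)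
    have hge : ∀ x, (b - a) x ≤ 0 := by
      apply comparison ω μ hω hμ hK
      intro x
      have e1 : (b - a : V → ℝ) = -(a - b) := by funext z; show b z - a z = -(a z - b z); ring
      rw [e1, show graphLap ω μ (-(a-b)) x = graphLap ω μ (0 - (a-b)) x by norm_num,
        graphLap_sub]
      have hz : graphLap ω μ (0 : V → ℝ) x = 0 := by simp [graphLap]
      rw [hz]
      simp only [Pi.neg_apply]
      linarith [h0 x]
    funext x
    have := hle x
    have := hge x
    simp only [Pi.sub_apply] at *
    linarith
  have hsurj : Function.Surjective L := LinearMap.surjective_of_injective hinj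
  obtain ⟨w, hw⟩ := hsurj f
  exact ⟨w, fun x => congrFun hw x⟩

/-- The total integral of a Laplacian vanishes. -/
lemma sum_graphLap (hωs : ∀ x y, ω x y = ω y x) (hμ : ∀ x, 0 < μ x) (f : V → ℝ) :
    ∑ x, μ x * graphLap ω μ f x = 0 := by
  have : ∀ x, μ x * graphLap ω μ f x = ∑ y, ω x y * (f y - f x) := by
    intro x
    unfold graphLap
    rw [← mul_assoc, mul_one_div, div_self (hμ x).ne', one_mul]
  rw [Finset.sum_congr rfl (fun x _ => this x)]
  rw [show (∑ x, ∑ y, ω x y * (f y - f x))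
      = (∑ x, ∑ y, ω x y * f y) - (∑ x, ∑ y, ω x y * f x) by
    rw [← Finset.sum_sub_distrib]
    apply Finset.sum_congr rfl; intro x _
    rw [← Finset.sum_sub_distrib]
    apply Finset.sum_congr rfl; intros; ring]
  rw [Finset.sum_comm (f := fun x y => ω x y * f y)]
  have : ∀ y x : V, ω x y * f y = ω y x * f y := fun y x => by rw [hωs]
  simp only [this]
  ring_nf

end GraphLemmas

section MoreLap
variable {V : Type*} [Fintype V] (ω : V → V → ℝ) (μ : V → ℝ)

lemma graphLap_neg (f : V → ℝ) (x : V) : graphLap ω μ (-f) x = -graphLap ω μ f x := by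
  have : (-f : V → ℝ) = (0 : V → ℝ) - f := by funext z; simp
  rw [this, graphLap_sub]
  have hz : graphLap ω μ (0 : V → ℝ) x = 0 := by simp [graphLap]
  rw [hz]
  ring

end MoreLap
section PrimFunLemmas

open MeasureTheory

variable {G : ℝ → ℝ}

lemma intF (hGc : ContinuousOn G (Set.Ici 0)) (a b : ℝ) :
    IntervalIntegrable (fun s : ℝ => 2 * s * G (s ^ 2)) volume a b := by
  apply ContinuousOn.intervalIntegrable
  apply ContinuousOn.mul
  · exact (continuous_const.mul continuous_id).continuousOn
  · exact hGc.comp (continuous_pow 2).continuousOn (fun x _ => sq_nonneg x)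

lemma primFun_split (hGc : ContinuousOn G (Set.Ici 0)) {a b : ℝ} :
    primFun G a = (∫ s in Real.sqrt a..Real.sqrt b, 2 * s * G (s ^ 2)) + primFun G b := by
  unfold primFun
  rw [intervalIntegral.integral_add_adjacent_intervals (intF hGc _ _) (intF hGc _ _)]

lemma primFun_diff_bounds (hGc : ContinuousOn G (Set.Ici 0))
    (hGpos : ∀ s, 0 ≤ s → 0 < G s) (hGmono : StrictMonoOn G (Set.Ici 0))
    {a b : ℝ} (ha : 0 ≤ a) (hab : a ≤ b) (hb : b ≤ 1) :
    0 ≤ primFun G a - primFun G b ∧ primFun G a - primFun G b ≤ G 1 * (b - a) := by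
  have hb0 : 0 ≤ b := le_trans ha hab
  have hs : Real.sqrt a ≤ Real.sqrt b := Real.sqrt_le_sqrt hab
  have hsa : 0 ≤ Real.sqrt a := Real.sqrt_nonneg a
  have hsb1 : Real.sqrt b ≤ 1 := by
    rw [show (1:ℝ) = Real.sqrt 1 by rw [Real.sqrt_one]]
    exact Real.sqrt_le_sqrt hb
  have key : primFun G a - primFun G b = ∫ s in Real.sqrt a..Real.sqrt b, 2 * s * G (s ^ 2) := by
    rw [primFun_split hGc (a := a) (b := b)]; ring
  constructor
  · rw [key]
    apply intervalIntegral.integral_nonneg hs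
    intro s hs'
    have h0s : 0 ≤ s := le_trans hsa hs'.1
    have := hGpos (s ^ 2) (sq_nonneg s)
    positivity
  · rw [key]
    have hmono : ∀ s ∈ Set.Icc (Real.sqrt a) (Real.sqrt b),
        2 * s * G (s ^ 2) ≤ 2 * G 1 * s := by
      intro s hs'
      have h0s : 0 ≤ s := le_trans hsa hs'.1
      have hs1 : s ≤ 1 := le_trans hs'.2 hsb1
      have hsq : s ^ 2 ≤ 1 := by nlinarith
      have : G (s ^ 2) ≤ G 1 := hGmono.monotoneOn (sq_nonneg s) (by norm_num) hsq
      nlinarith [hGpos (s ^ 2) (sq_nonneg s)]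
    have := intervalIntegral.integral_mono_on hs (intF hGc _ _)
      (by apply ContinuousOn.intervalIntegrable; exact
        (continuous_const.mul continuous_id).continuousOn) hmono
    calc (∫ s in Real.sqrt a..Real.sqrt b, 2 * s * G (s ^ 2))
        ≤ ∫ s in Real.sqrt a..Real.sqrt b, 2 * G 1 * s := this
      _ = G 1 * (b - a) := by
          rw [intervalIntegral.integral_const_mul]
          have hid : (∫ x in (Real.sqrt a)..(Real.sqrt b), x)
              = ((Real.sqrt b) ^ 2 - (Real.sqrt a) ^ 2) / 2 := by simp
          rw [hid, Real.sq_sqrt hb0, Real.sq_sqrt ha]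
          ring

lemma primFun_one : primFun G 1 = 0 := by
  unfold primFun
  rw [Real.sqrt_one, intervalIntegral.integral_same]

lemma primFun_nonneg (hGc : ContinuousOn G (Set.Ici 0))
    (hGpos : ∀ s, 0 ≤ s → 0 < G s) (hGmono : StrictMonoOn G (Set.Ici 0))
    {t : ℝ} (ht : 0 ≤ t) (ht1 : t ≤ 1) : 0 ≤ primFun G t := by
  have := (primFun_diff_bounds hGc hGpos hGmono ht ht1 le_rfl).1
  rw [primFun_one] at this
  linarith

lemma primFun_neg_of_one_lt (hGc : ContinuousOn G (Set.Ici 0))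
    (hGpos : ∀ s, 0 ≤ s → 0 < G s) (hGmono : StrictMonoOn G (Set.Ici 0))
    {t : ℝ} (ht : 1 < t) : primFun G t < 0 := by
  have ht0 : (0:ℝ) ≤ 1 := by norm_num
  have key : primFun G 1 - primFun G t = ∫ s in (Real.sqrt 1)..(Real.sqrt t), 2 * s * G (s ^ 2) := by
    rw [primFun_split hGc (a := (1:ℝ)) (b := t)]; ring
  rw [primFun_one] at key
  have hs1 : (1:ℝ) ≤ Real.sqrt t := by
    rw [show (1:ℝ) = Real.sqrt 1 by rw [Real.sqrt_one]]
    exact Real.sqrt_le_sqrt ht.le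
  have hlow : ∀ s ∈ Set.Icc (1:ℝ) (Real.sqrt t), 2 * G 1 * s ≤ 2 * s * G (s ^ 2) := by
    intro s hs'
    have h1s : 1 ≤ s := hs'.1
    have : G 1 ≤ G (s ^ 2) := hGmono.monotoneOn (by norm_num) (sq_nonneg s) (by nlinarith)
    nlinarith [hGpos 1 (by norm_num)]
  have hint := intervalIntegral.integral_mono_on hs1
      (by apply ContinuousOn.intervalIntegrable; exact
        (continuous_const.mul continuous_id).continuousOn) (intF hGc _ _) hlow
  have hval : (∫ s in (1:ℝ)..(Real.sqrt t), 2 * G 1 * s) = G 1 * (t - 1) := by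
    rw [intervalIntegral.integral_const_mul]
    have hid : (∫ x in (1:ℝ)..(Real.sqrt t), x) = ((Real.sqrt t) ^ 2 - (1:ℝ) ^ 2) / 2 := by simp
    rw [hid, Real.sq_sqrt (by linarith : (0:ℝ) ≤ t)]
    ring
  rw [Real.sqrt_one] at key
  have hG1 := hGpos 1 (by norm_num)
  nlinarith [hint, hval, key]

end PrimFunLemmas
section KeyIneq

variable {G H : ℝ → ℝ}

lemma phi_mono (hHpos : ∀ s, 0 ≤ s → 0 < H s) (hHmono : StrictMonoOn H (Set.Ici 0))
    {s t : ℝ} (hst : s ≤ t) : Real.exp s * H (Real.exp s) ≤ Real.exp t * H (Real.exp t) := by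
  have h1 : Real.exp s ≤ Real.exp t := Real.exp_le_exp.mpr hst
  have h2 : H (Real.exp s) ≤ H (Real.exp t) :=
    hHmono.monotoneOn (Real.exp_nonneg s) (Real.exp_nonneg t) h1
  have h3 : 0 < H (Real.exp s) := hHpos _ (Real.exp_nonneg s)
  nlinarith [Real.exp_pos s, Real.exp_pos t]

lemma phi_strict (hHpos : ∀ s, 0 ≤ s → 0 < H s) (hHmono : StrictMonoOn H (Set.Ici 0))
    {s t : ℝ} (hst : s < t) : Real.exp s * H (Real.exp s) < Real.exp t * H (Real.exp t) := by
  have h1 : Real.exp s < Real.exp t := Real.exp_lt_exp.mpr hst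
  have h2 : H (Real.exp s) < H (Real.exp t) :=
    hHmono (Real.exp_nonneg s) (Real.exp_nonneg t) h1
  have h3 : 0 < H (Real.exp s) := hHpos _ (Real.exp_nonneg s)
  nlinarith [Real.exp_pos s, Real.exp_pos t]

lemma phi_le_H1 (hHpos : ∀ s, 0 ≤ s → 0 < H s) (hHmono : StrictMonoOn H (Set.Ici 0))
    {t : ℝ} (ht : t ≤ 0) : Real.exp t * H (Real.exp t) ≤ H 1 := by
  have := phi_mono hHpos hHmono ht
  rw [Real.exp_zero, one_mul] at this
  exact this

lemma exp_sub_le {a b : ℝ} (hab : a ≤ b) (hb : b ≤ 0) :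
    Real.exp b - Real.exp a ≤ b - a := by
  have h1 : (a - b) + 1 ≤ Real.exp (a - b) := Real.add_one_le_exp _
  have h2 : Real.exp a = Real.exp b * Real.exp (a - b) := by
    rw [← Real.exp_add]; ring_nf
  have h3 : Real.exp b ≤ 1 := Real.exp_le_one_iff.mpr hb
  nlinarith [Real.exp_pos b]

/-- The key monotonicity inequality for the iteration scheme. -/
lemma key_ineq (hGc : ContinuousOn G (Set.Ici 0))
    (hGpos : ∀ s, 0 ≤ s → 0 < G s) (hGmono : StrictMonoOn G (Set.Ici 0))
    (hHpos : ∀ s, 0 ≤ s → 0 < H s) (hHmono : StrictMonoOn H (Set.Ici 0))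
    {lam1 lam2 K α α' β β' : ℝ}
    (hl1 : 0 < lam1) (hl12 : lam1 ≤ lam2) (hK : lam2 * (G 1 * H 1) ≤ K)
    (hα : α ≤ α') (hα0 : α' ≤ 0) (hβ : β ≤ β') (hβ0 : β' ≤ 0) :
    lam1 * Real.exp β * H (Real.exp β) * primFun G (Real.exp α)
      - lam2 * Real.exp β' * H (Real.exp β') * primFun G (Real.exp α') ≤ K * (α' - α) := by
  have hea : Real.exp α ≤ Real.exp α' := Real.exp_le_exp.mpr hα
  have hea1 : Real.exp α' ≤ 1 := Real.exp_le_one_iff.mpr hα0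
  have hbounds := primFun_diff_bounds hGc hGpos hGmono (Real.exp_nonneg α) hea hea1
  have hga' : 0 ≤ primFun G (Real.exp α') :=
    primFun_nonneg hGc hGpos hGmono (Real.exp_nonneg α') hea1
  have hga : 0 ≤ primFun G (Real.exp α) :=
    primFun_nonneg hGc hGpos hGmono (Real.exp_nonneg α) (le_trans hea hea1)
  have hpb : Real.exp β * H (Real.exp β) ≤ Real.exp β' * H (Real.exp β') :=
    phi_mono hHpos hHmono hβ
  have hpb1 : Real.exp β' * H (Real.exp β') ≤ H 1 := phi_le_H1 hHpos hHmono hβ0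
  have hpbpos : 0 < Real.exp β * H (Real.exp β) :=
    mul_pos (Real.exp_pos β) (hHpos _ (Real.exp_nonneg β))
  have hexp : Real.exp α' - Real.exp α ≤ α' - α := exp_sub_le hα hα0
  have hG1 : 0 < G 1 := hGpos 1 (by norm_num)
  have hH1 : 0 < H 1 := hHpos 1 (by norm_num)
  set ga := primFun G (Real.exp α)
  set ga' := primFun G (Real.exp α')
  set pb := Real.exp β * H (Real.exp β)
  set pb' := Real.exp β' * H (Real.exp β')
  have step1 : lam1 * pb * ga ≤ lam2 * pb' * ga := by
    apply mul_le_mul_of_nonneg_right _ hga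
    nlinarith
  have step2 : lam2 * pb' * ga - lam2 * pb' * ga' = lam2 * pb' * (ga - ga') := by ring
  have step3 : lam2 * pb' * (ga - ga') ≤ lam2 * (H 1) * (G 1 * (α' - α)) := by
    have hd1 : ga - ga' ≤ G 1 * (Real.exp α' - Real.exp α) := hbounds.2
    have hd2 : ga - ga' ≤ G 1 * (α' - α) := by nlinarith
    have h0 : 0 ≤ ga - ga' := hbounds.1
    have hpb'pos : 0 < pb' := mul_pos (Real.exp_pos β') (hHpos _ (Real.exp_nonneg β'))
    have hl2 : 0 < lam2 := lt_of_lt_of_le hl1 hl12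
    have e0 : lam2 * pb' ≤ lam2 * H 1 := mul_le_mul_of_nonneg_left hpb1 hl2.le
    have e1 : lam2 * pb' * (ga - ga') ≤ lam2 * (H 1) * (ga - ga') :=
      mul_le_mul_of_nonneg_right e0 h0
    have e2 : lam2 * (H 1) * (ga - ga') ≤ lam2 * (H 1) * (G 1 * (α' - α)) :=
      mul_le_mul_of_nonneg_left hd2 (by positivity)
    linarith
  have : lam1 * pb * ga - lam2 * pb' * ga' ≤ lam2 * (H 1) * (G 1 * (α' - α)) := by
    nlinarith
  have hshape1 : lam1 * Real.exp β * H (Real.exp β) * ga = lam1 * pb * ga := by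
    simp only [pb]; ring
  have hshape2 : lam2 * Real.exp β' * H (Real.exp β') * ga' = lam2 * pb' * ga' := by
    simp only [pb']; ring
  rw [hshape1, hshape2]
  have hfin : lam2 * (H 1) * (G 1 * (α' - α)) ≤ K * (α' - α) := by
    have h1 : 0 ≤ α' - α := by linarith
    nlinarith
  linarith
end KeyIneq
section SolFacts
set_option linter.unusedSectionVars false

variable {V : Type*} [Fintype V] [DecidableEq V] (ω : V → V → ℝ) (μ : V → ℝ)

lemma graphLap_add (f g : V → ℝ) (x : V) :
    graphLap ω μ (fun y => f y + g y) x = graphLap ω μ f x + graphLap ω μ g x := by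
  simp only [graphLap]
  rw [← mul_add, ← Finset.sum_add_distrib]
  congr 1
  apply Finset.sum_congr rfl
  intro y _
  ring

lemma dirac_sum_nonneg (hμ : ∀ x, 0 < μ x) {N : ℕ} (p : Fin N → V) (x : V) :
    0 ≤ ∑ j, diracDelta μ (p j) x := by
  apply Finset.sum_nonneg
  intro j _
  unfold diracDelta
  split
  · have := hμ (p j); positivity
  · exact le_rfl

variable {G H : ℝ → ℝ} {N1 N2 : ℕ} {u₀ v₀ : V → ℝ}

/-- Any solution of `(S_lam)` with `lam > 0` satisfies `u₀ + u ≤ 0` and `v₀ + v ≤ 0`. -/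
lemma sol_shift_nonpos [Nonempty V]
    (hω : ∀ x y, 0 ≤ ω x y) (hμ : ∀ x, 0 < μ x)
    (hGc : ContinuousOn G (Set.Ici 0))
    (hGpos : ∀ s, 0 ≤ s → 0 < G s) (hGmono : StrictMonoOn G (Set.Ici 0))
    (hHc : ContinuousOn H (Set.Ici 0))
    (hHpos : ∀ s, 0 ≤ s → 0 < H s) (hHmono : StrictMonoOn H (Set.Ici 0))
    {p1 : Fin N1 → V} {p2 : Fin N2 → V}
    (hu₀ : ∀ x, graphLap ω μ u₀ x =
      -(4 * Real.pi * N1) / graphVol μ + 4 * Real.pi * ∑ j, diracDelta μ (p1 j) x)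
    (hv₀ : ∀ x, graphLap ω μ v₀ x =
      -(4 * Real.pi * N2) / graphVol μ + 4 * Real.pi * ∑ j, diracDelta μ (p2 j) x)
    {lam : ℝ} (hlam : 0 < lam) {u v : V → ℝ}
    (hsol : isSolution ω μ G H N1 N2 u₀ v₀ lam u v) :
    (∀ x, u₀ x + u x ≤ 0) ∧ (∀ x, v₀ x + v x ≤ 0) := by
  constructor
  · obtain ⟨x0, hx0⟩ := Finite.exists_max (fun x => u₀ x + u x)
    have hlap : graphLap ω μ (fun y => u₀ y + u y) x0 ≤ 0 :=
      graphLap_le_zero_at_max ω μ hω hμ _ x0 hx0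
    rw [graphLap_add ω μ u₀ u x0, hu₀ x0, (hsol x0).1] at hlap
    have hδ : 0 ≤ 4 * Real.pi * ∑ j, diracDelta μ (p1 j) x0 := by
      have := dirac_sum_nonneg μ hμ p1 x0
      positivity
    have hkey : 0 ≤ lam * Real.exp (v₀ x0 + v x0) * H (Real.exp (v₀ x0 + v x0)) *
        primFun G (Real.exp (u₀ x0 + u x0)) := by
      have hz : -(4 * Real.pi * (N1:ℝ)) / graphVol μ + 4 * Real.pi * (N1:ℝ) / graphVol μ = 0 := by
        ring
      linarith
    by_contra hcon
    push_neg at hcon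
    obtain ⟨z, hz⟩ := hcon
    have hzx0 : 0 < u₀ x0 + u x0 := lt_of_lt_of_le hz (hx0 z)
    have h1 : 1 < Real.exp (u₀ x0 + u x0) := by
      rw [show (1:ℝ) = Real.exp 0 from (Real.exp_zero).symm]
      exact Real.exp_lt_exp.mpr hzx0
    have hneg : primFun G (Real.exp (u₀ x0 + u x0)) < 0 :=
      primFun_neg_of_one_lt hGc hGpos hGmono h1
    have hpos : 0 < lam * Real.exp (v₀ x0 + v x0) * H (Real.exp (v₀ x0 + v x0)) := by
      have := hHpos (Real.exp (v₀ x0 + v x0)) (Real.exp_nonneg _)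
      have := Real.exp_pos (v₀ x0 + v x0)
      positivity
    nlinarith
  · obtain ⟨x0, hx0⟩ := Finite.exists_max (fun x => v₀ x + v x)
    have hlap : graphLap ω μ (fun y => v₀ y + v y) x0 ≤ 0 :=
      graphLap_le_zero_at_max ω μ hω hμ _ x0 hx0
    rw [graphLap_add ω μ v₀ v x0, hv₀ x0, (hsol x0).2] at hlap
    have hδ : 0 ≤ 4 * Real.pi * ∑ j, diracDelta μ (p2 j) x0 := by
      have := dirac_sum_nonneg μ hμ p2 x0
      positivity
    have hkey : 0 ≤ lam * Real.exp (u₀ x0 + u x0) * G (Real.exp (u₀ x0 + u x0)) *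
        primFun H (Real.exp (v₀ x0 + v x0)) := by
      have hz : -(4 * Real.pi * (N2:ℝ)) / graphVol μ + 4 * Real.pi * (N2:ℝ) / graphVol μ = 0 := by
        ring
      linarith
    by_contra hcon
    push_neg at hcon
    obtain ⟨z, hz⟩ := hcon
    have hzx0 : 0 < v₀ x0 + v x0 := lt_of_lt_of_le hz (hx0 z)
    have h1 : 1 < Real.exp (v₀ x0 + v x0) := by
      rw [show (1:ℝ) = Real.exp 0 from (Real.exp_zero).symm]
      exact Real.exp_lt_exp.mpr hzx0
    have hneg : primFun H (Real.exp (v₀ x0 + v x0)) < 0 :=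
      primFun_neg_of_one_lt hHc hHpos hHmono h1
    have hpos : 0 < lam * Real.exp (u₀ x0 + u x0) * G (Real.exp (u₀ x0 + u x0)) := by
      have := hGpos (Real.exp (u₀ x0 + u x0)) (Real.exp_nonneg _)
      have := Real.exp_pos (u₀ x0 + u x0)
      positivity
    nlinarith

end SolFacts
section Propagation
set_option linter.unusedSectionVars false

variable {V : Type*} [Fintype V] [DecidableEq V] (ω : V → V → ℝ) (μ : V → ℝ)

lemma neighbors_zero (hω : ∀ x y, 0 ≤ ω x y) (hμ : ∀ x, 0 < μ x)
    (w : V → ℝ) (hw : ∀ x, w x ≤ 0) (x : V) (hx : w x = 0)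
    (hlap : 0 ≤ graphLap ω μ w x) : ∀ y, 0 < ω x y → w y = 0 := by
  have hrw : graphLap ω μ w x = (1 / μ x) * ∑ y, ω x y * w y := by
    unfold graphLap
    congr 1
    apply Finset.sum_congr rfl
    intro y _
    rw [hx]
    ring
  rw [hrw] at hlap
  have hμx := hμ x
  have hsum_nonneg : 0 ≤ ∑ y, ω x y * w y := by
    by_contra hcon
    push_neg at hcon
    nlinarith [mul_pos (show (0:ℝ) < 1 / μ x by positivity) (neg_pos.mpr hcon)]
  have hterm : ∀ y ∈ Finset.univ, ω x y * w y ≤ 0 := fun y _ =>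
    mul_nonpos_of_nonneg_of_nonpos (hω x y) (hw y)
  have hsum_zero : ∑ y, ω x y * w y = 0 :=
    le_antisymm (Finset.sum_nonpos hterm) hsum_nonneg
  have hall := (Finset.sum_eq_zero_iff_of_nonpos hterm).mp hsum_zero
  intro y hy
  have := hall y (Finset.mem_univ y)
  rcases mul_eq_zero.mp this with h | h
  · exact absurd h (ne_of_gt hy)
  · exact h

lemma propagate_zero
    (hconn : ∀ x y : V, x ≠ y → ∃ (n : ℕ) (c : Fin (n + 1) → V),
      c 0 = x ∧ c (Fin.last n) = y ∧ ∀ i : Fin n, 0 < ω (c i.castSucc) (c i.succ))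
    (w : V → ℝ) (hz : ∀ x, w x = 0 → ∀ y, 0 < ω x y → w y = 0)
    {x0 : V} (h0 : w x0 = 0) : ∀ y, w y = 0 := by
  intro y
  by_cases hxy : x0 = y
  · rw [← hxy]; exact h0
  · obtain ⟨n, c, hc0, hclast, hedge⟩ := hconn x0 y hxy
    have claim : ∀ k : ℕ, ∀ hk : k < n + 1, w (c ⟨k, hk⟩) = 0 := by
      intro k
      induction k with
      | zero =>
        intro hk
        have : (⟨0, hk⟩ : Fin (n + 1)) = 0 := rfl
        rw [this, hc0]
        exact h0
      | succ m ih =>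
        intro hk
        have hm : m < n := by omega
        have hm1 : m < n + 1 := by omega
        have hwm := ih hm1
        have hedge' := hedge ⟨m, hm⟩
        have hcast : (⟨m, hm⟩ : Fin n).castSucc = (⟨m, hm1⟩ : Fin (n + 1)) := rfl
        have hsucc : (⟨m, hm⟩ : Fin n).succ = (⟨m + 1, hk⟩ : Fin (n + 1)) := rfl
        rw [hcast, hsucc] at hedge'
        exact hz _ hwm _ hedge'
    have := claim n (by omega)
    have hlast : (Fin.last n) = (⟨n, by omega⟩ : Fin (n + 1)) := rfl
    rw [← hclast, hlast]
    exact this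

lemma vol_pos [Nonempty V] (hμ : ∀ x, 0 < μ x) : 0 < graphVol μ := by
  unfold graphVol
  apply Finset.sum_pos (fun x _ => hμ x) Finset.univ_nonempty

/-- For any solution there are points where `primFun G (e^{u₀+u})` and
`primFun H (e^{v₀+v})` are positive. -/
lemma exists_pos_pts [Nonempty V]
    (hωs : ∀ x y, ω x y = ω y x) (hμ : ∀ x, 0 < μ x)
    {G H : ℝ → ℝ}
    (hGpos : ∀ s, 0 ≤ s → 0 < G s) (hHpos : ∀ s, 0 ≤ s → 0 < H s)
    {N1 N2 : ℕ} (hN1 : 0 < N1) (hN2 : 0 < N2) {u₀ v₀ : V → ℝ}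
    {lam : ℝ} (hlam : 0 < lam) {u v : V → ℝ}
    (hsol : isSolution ω μ G H N1 N2 u₀ v₀ lam u v) :
    (∃ x, 0 < primFun G (Real.exp (u₀ x + u x))) ∧
    (∃ x, 0 < primFun H (Real.exp (v₀ x + v x))) := by
  have hvol := vol_pos μ hμ
  have hpi := Real.pi_pos
  constructor
  · by_contra hcon
    push_neg at hcon
    have hzero := sum_graphLap ω μ hωs hμ u
    have hsum : ∑ x, μ x * graphLap ω μ u x
        = ∑ x, μ x * (-lam * Real.exp (v₀ x + v x) * H (Real.exp (v₀ x + v x)) *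
            primFun G (Real.exp (u₀ x + u x))) + ∑ x, μ x * (4 * Real.pi * N1 / graphVol μ) := by
      rw [← Finset.sum_add_distrib]
      apply Finset.sum_congr rfl
      intro x _
      rw [(hsol x).1]
      ring
    have hconst : ∑ x, μ x * (4 * Real.pi * N1 / graphVol μ) = 4 * Real.pi * N1 := by
      rw [← Finset.sum_mul]
      show graphVol μ * _ = _
      field_simp
    have hN1pos : (0:ℝ) < 4 * Real.pi * N1 := by
      have : (0:ℝ) < (N1:ℝ) := by exact_mod_cast hN1
      positivity
    have hterm : ∀ x ∈ Finset.univ, 0 ≤ μ x * (-lam * Real.exp (v₀ x + v x) *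
        H (Real.exp (v₀ x + v x)) * primFun G (Real.exp (u₀ x + u x))) := by
      intro x _
      have h1 : 0 < H (Real.exp (v₀ x + v x)) := hHpos _ (Real.exp_nonneg _)
      have h2 : primFun G (Real.exp (u₀ x + u x)) ≤ 0 := hcon x
      have h3 := Real.exp_pos (v₀ x + v x)
      have h4 := hμ x
      have hre : μ x * (-lam * Real.exp (v₀ x + v x) * H (Real.exp (v₀ x + v x)) *
          primFun G (Real.exp (u₀ x + u x)))
          = (μ x * lam * Real.exp (v₀ x + v x) * H (Real.exp (v₀ x + v x))) *
            (-(primFun G (Real.exp (u₀ x + u x)))) := by ring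
      rw [hre]
      apply mul_nonneg (by positivity) (by linarith)
    have := Finset.sum_nonneg hterm
    rw [hsum, hconst] at hzero
    linarith
  · by_contra hcon
    push_neg at hcon
    have hzero := sum_graphLap ω μ hωs hμ v
    have hsum : ∑ x, μ x * graphLap ω μ v x
        = ∑ x, μ x * (-lam * Real.exp (u₀ x + u x) * G (Real.exp (u₀ x + u x)) *
            primFun H (Real.exp (v₀ x + v x))) + ∑ x, μ x * (4 * Real.pi * N2 / graphVol μ) := by
      rw [← Finset.sum_add_distrib]
      apply Finset.sum_congr rfl
      intro x _
      rw [(hsol x).2]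
      ring
    have hconst : ∑ x, μ x * (4 * Real.pi * N2 / graphVol μ) = 4 * Real.pi * N2 := by
      rw [← Finset.sum_mul]
      show graphVol μ * _ = _
      field_simp
    have hN2pos : (0:ℝ) < 4 * Real.pi * N2 := by
      have : (0:ℝ) < (N2:ℝ) := by exact_mod_cast hN2
      positivity
    have hterm : ∀ x ∈ Finset.univ, 0 ≤ μ x * (-lam * Real.exp (u₀ x + u x) *
        G (Real.exp (u₀ x + u x)) * primFun H (Real.exp (v₀ x + v x))) := by
      intro x _
      have h1 : 0 < G (Real.exp (u₀ x + u x)) := hGpos _ (Real.exp_nonneg _)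
      have h2 : primFun H (Real.exp (v₀ x + v x)) ≤ 0 := hcon x
      have h3 := Real.exp_pos (u₀ x + u x)
      have h4 := hμ x
      have hre : μ x * (-lam * Real.exp (u₀ x + u x) * G (Real.exp (u₀ x + u x)) *
          primFun H (Real.exp (v₀ x + v x)))
          = (μ x * lam * Real.exp (u₀ x + u x) * G (Real.exp (u₀ x + u x))) *
            (-(primFun H (Real.exp (v₀ x + v x)))) := by ring
      rw [hre]
      apply mul_nonneg (by positivity) (by linarith)
    have := Finset.sum_nonneg hterm
    rw [hsum, hconst] at hzero
    linarith

end Propagation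
set_option maxHeartbeats 2000000 in
theorem stmt_8
    {V : Type*} [Fintype V] [DecidableEq V]
    (hV : 1 < Fintype.card V)
    (ω : V → V → ℝ) (μ : V → ℝ)
    (hω_nonneg : ∀ x y, 0 ≤ ω x y)
    (hω_symm : ∀ x y, ω x y = ω y x)
    (hω_diag : ∀ x, ω x x = 0)
    (hconn : ∀ x y : V, x ≠ y → ∃ (n : ℕ) (c : Fin (n + 1) → V),
      c 0 = x ∧ c (Fin.last n) = y ∧ ∀ i : Fin n, 0 < ω (c i.castSucc) (c i.succ))
    (hμ : ∀ x, 0 < μ x)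
    (G H : ℝ → ℝ)
    (hGpos : ∀ s, 0 ≤ s → 0 < G s) (hHpos : ∀ s, 0 ≤ s → 0 < H s)
    (hGmono : StrictMonoOn G (Set.Ici 0)) (hHmono : StrictMonoOn H (Set.Ici 0))
    (hGsmooth : ContDiffOn ℝ (⊤ : ℕ∞) G (Set.Ici 0)) (hHsmooth : ContDiffOn ℝ (⊤ : ℕ∞) H (Set.Ici 0))
    (N1 N2 : ℕ) (hN1 : 0 < N1) (hN2 : 0 < N2)
    (p1 : Fin N1 → V) (p2 : Fin N2 → V)
    (u₀ v₀ : V → ℝ)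
    (hu₀ : ∀ x, graphLap ω μ u₀ x =
      -(4 * Real.pi * N1) / graphVol μ + 4 * Real.pi * ∑ j, diracDelta μ (p1 j) x)
    (hv₀ : ∀ x, graphLap ω μ v₀ x =
      -(4 * Real.pi * N2) / graphVol μ + 4 * Real.pi * ∑ j, diracDelta μ (p2 j) x)
    (hne : {lam : ℝ | 0 < lam ∧ ∃ u v : V → ℝ, isSolution ω μ G H N1 N2 u₀ v₀ lam u v}.Nonempty) :
    ∀ lam : ℝ, sInf {lam' : ℝ | 0 < lam' ∧ ∃ u v : V → ℝ, isSolution ω μ G H N1 N2 u₀ v₀ lam' u v} < lam →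
      ∃! p : (V → ℝ) × (V → ℝ), isMaximalSolution ω μ G H N1 N2 u₀ v₀ lam p.1 p.2 := by
  classical
  intro lam hlt
  have hNV : Nonempty V := Fintype.card_pos_iff.mp (by omega)
  have hGc : ContinuousOn G (Set.Ici 0) := hGsmooth.continuousOn
  have hHc : ContinuousOn H (Set.Ici 0) := hHsmooth.continuousOn
  have hG1 : 0 < G 1 := hGpos 1 (by norm_num)
  have hH1 : 0 < H 1 := hHpos 1 (by norm_num)
  obtain ⟨lam0, hlam0S, hlam0lt⟩ := exists_lt_of_csInf_lt hne hlt
  obtain ⟨hlam0pos, a0, b0, hsol0⟩ := hlam0S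
  have hlam : 0 < lam := lt_trans hlam0pos hlam0lt
  have hshift0 := sol_shift_nonpos ω μ hω_nonneg hμ hGc hGpos hGmono hHc hHpos hHmono
    hu₀ hv₀ hlam0pos hsol0
  -- the constant K
  obtain ⟨K, hKdef⟩ : ∃ K : ℝ, K = lam * (G 1 * H 1) + 1 := ⟨_, rfl⟩
  have hKpos : 0 < K := by rw [hKdef]; positivity
  have hKge : lam * (G 1 * H 1) ≤ K := by rw [hKdef]; linarith
  have hKge' : lam * (H 1 * G 1) ≤ K := by rw [mul_comm (H 1)]; exact hKge
  -- the iteration step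
  have hstepE : ∀ p : (V → ℝ) × (V → ℝ), ∃ q : (V → ℝ) × (V → ℝ),
      (∀ x, graphLap ω μ q.1 x - K * q.1 x =
        (-lam * Real.exp (v₀ x + p.2 x) * H (Real.exp (v₀ x + p.2 x)) *
          primFun G (Real.exp (u₀ x + p.1 x)) + 4 * Real.pi * N1 / graphVol μ)
          - K * p.1 x) ∧
      (∀ x, graphLap ω μ q.2 x - K * q.2 x =
        (-lam * Real.exp (u₀ x + p.1 x) * G (Real.exp (u₀ x + p.1 x)) *
          primFun H (Real.exp (v₀ x + p.2 x)) + 4 * Real.pi * N2 / graphVol μ)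
          - K * p.2 x) := by
    intro p
    obtain ⟨w1, hw1⟩ := solveLin ω μ hω_nonneg hμ hKpos
      (fun x => (-lam * Real.exp (v₀ x + p.2 x) * H (Real.exp (v₀ x + p.2 x)) *
          primFun G (Real.exp (u₀ x + p.1 x)) + 4 * Real.pi * N1 / graphVol μ) - K * p.1 x)
    obtain ⟨w2, hw2⟩ := solveLin ω μ hω_nonneg hμ hKpos
      (fun x => (-lam * Real.exp (u₀ x + p.1 x) * G (Real.exp (u₀ x + p.1 x)) *
          primFun H (Real.exp (v₀ x + p.2 x)) + 4 * Real.pi * N2 / graphVol μ) - K * p.2 x)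
    exact ⟨(w1, w2), hw1, hw2⟩
  choose step hstep1 hstep2 using hstepE
  set sq : ℕ → (V → ℝ) × (V → ℝ) := fun n => step^[n] (-u₀, -v₀) with hsqdef
  have hsq0 : sq 0 = (-u₀, -v₀) := rfl
  have hsqS : ∀ n, sq (n + 1) = step (sq n) := by
    intro n
    simp only [hsqdef, Function.iterate_succ_apply']
  have hEq1 : ∀ n x, graphLap ω μ (sq (n+1)).1 x - K * (sq (n+1)).1 x =
      (-lam * Real.exp (v₀ x + (sq n).2 x) * H (Real.exp (v₀ x + (sq n).2 x)) *
        primFun G (Real.exp (u₀ x + (sq n).1 x)) + 4 * Real.pi * N1 / graphVol μ)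
        - K * (sq n).1 x := by
    intro n x
    rw [hsqS n]
    exact hstep1 (sq n) x
  have hEq2 : ∀ n x, graphLap ω μ (sq (n+1)).2 x - K * (sq (n+1)).2 x =
      (-lam * Real.exp (u₀ x + (sq n).1 x) * G (Real.exp (u₀ x + (sq n).1 x)) *
        primFun H (Real.exp (v₀ x + (sq n).2 x)) + 4 * Real.pi * N2 / graphVol μ)
        - K * (sq n).2 x := by
    intro n x
    rw [hsqS n]
    exact hstep2 (sq n) x
  -- Monotonicity of the iteration
  have hMon : ∀ n, (∀ x, (sq (n+1)).1 x ≤ (sq n).1 x) ∧ (∀ x, (sq (n+1)).2 x ≤ (sq n).2 x)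
      ∧ (∀ x, u₀ x + (sq n).1 x ≤ 0) ∧ (∀ x, v₀ x + (sq n).2 x ≤ 0) := by
    have hvolpos := vol_pos μ hμ
    have hpi := Real.pi_pos
    intro n
    induction n with
    | zero =>
      have hsh1 : ∀ x, u₀ x + (sq 0).1 x ≤ 0 := by
        intro x; rw [hsq0]; simp
      have hsh2 : ∀ x, v₀ x + (sq 0).2 x ≤ 0 := by
        intro x; rw [hsq0]; simp
      have hF0u : ∀ x, (-lam * Real.exp (v₀ x + (sq 0).2 x) * H (Real.exp (v₀ x + (sq 0).2 x)) *
          primFun G (Real.exp (u₀ x + (sq 0).1 x)) + 4 * Real.pi * N1 / graphVol μ)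
          = 4 * Real.pi * N1 / graphVol μ := by
        intro x
        rw [hsq0]
        simp only [Pi.neg_apply]
        rw [show u₀ x + -u₀ x = 0 by ring, Real.exp_zero, primFun_one]
        ring
      have hF0v : ∀ x, (-lam * Real.exp (u₀ x + (sq 0).1 x) * G (Real.exp (u₀ x + (sq 0).1 x)) *
          primFun H (Real.exp (v₀ x + (sq 0).2 x)) + 4 * Real.pi * N2 / graphVol μ)
          = 4 * Real.pi * N2 / graphVol μ := by
        intro x
        rw [hsq0]
        simp only [Pi.neg_apply]
        rw [show v₀ x + -v₀ x = 0 by ring, Real.exp_zero, primFun_one]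
        ring
      have hdec1 : ∀ x, (sq 1).1 x ≤ (sq 0).1 x := by
        have hcmp := comparison ω μ hω_nonneg hμ hKpos ((sq 1).1 - (sq 0).1) ?_
        · intro x
          have := hcmp x
          simp only [Pi.sub_apply] at this
          linarith
        · intro x
          rw [graphLap_sub]
          have hA := hEq1 0 x
          rw [show (0+1) = 1 from rfl] at hA
          rw [hF0u x] at hA
          have hB : graphLap ω μ (sq 0).1 x = -graphLap ω μ u₀ x := by
            rw [hsq0]
            exact graphLap_neg ω μ u₀ x
          rw [hu₀ x] at hB
          have hδ : 0 ≤ 4 * Real.pi * ∑ j, diracDelta μ (p1 j) x := by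
            have := dirac_sum_nonneg μ hμ p1 x
            positivity
          have hring : -(-(4 * Real.pi * (N1:ℝ)) / graphVol μ)
              = 4 * Real.pi * (N1:ℝ) / graphVol μ := by ring
          simp only [Pi.sub_apply]
          linarith [hA, hB]
      have hdec2 : ∀ x, (sq 1).2 x ≤ (sq 0).2 x := by
        have hcmp := comparison ω μ hω_nonneg hμ hKpos ((sq 1).2 - (sq 0).2) ?_
        · intro x
          have := hcmp x
          simp only [Pi.sub_apply] at this
          linarith
        · intro x
          rw [graphLap_sub]
          have hA := hEq2 0 x
          rw [show (0+1) = 1 from rfl] at hA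
          rw [hF0v x] at hA
          have hB : graphLap ω μ (sq 0).2 x = -graphLap ω μ v₀ x := by
            rw [hsq0]
            exact graphLap_neg ω μ v₀ x
          rw [hv₀ x] at hB
          have hδ : 0 ≤ 4 * Real.pi * ∑ j, diracDelta μ (p2 j) x := by
            have := dirac_sum_nonneg μ hμ p2 x
            positivity
          have hring : -(-(4 * Real.pi * (N2:ℝ)) / graphVol μ)
              = 4 * Real.pi * (N2:ℝ) / graphVol μ := by ring
          simp only [Pi.sub_apply]
          linarith [hA, hB]
      exact ⟨hdec1, hdec2, hsh1, hsh2⟩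
    | succ n ih =>
      obtain ⟨ihu, ihv, ihsu, ihsv⟩ := ih
      have hsu' : ∀ x, u₀ x + (sq (n+1)).1 x ≤ 0 := fun x => by linarith [ihu x, ihsu x]
      have hsv' : ∀ x, v₀ x + (sq (n+1)).2 x ≤ 0 := fun x => by linarith [ihv x, ihsv x]
      have hdec1 : ∀ x, (sq (n+2)).1 x ≤ (sq (n+1)).1 x := by
        have hcmp := comparison ω μ hω_nonneg hμ hKpos ((sq (n+2)).1 - (sq (n+1)).1) ?_
        · intro x
          have := hcmp x
          simp only [Pi.sub_apply] at this
          linarith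
        · intro x
          rw [graphLap_sub]
          have hA := hEq1 (n+1) x
          rw [show (n+1+1) = n+2 from rfl] at hA
          have hB := hEq1 n x
          have hkey := key_ineq hGc hGpos hGmono hHpos hHmono
            (lam1 := lam) (lam2 := lam) (K := K)
            hlam le_rfl hKge
            (show u₀ x + (sq (n+1)).1 x ≤ u₀ x + (sq n).1 x by linarith [ihu x])
            (ihsu x)
            (show v₀ x + (sq (n+1)).2 x ≤ v₀ x + (sq n).2 x by linarith [ihv x])
            (ihsv x)
          simp only [Pi.sub_apply]
          linarith [hA, hB, hkey]
      have hdec2 : ∀ x, (sq (n+2)).2 x ≤ (sq (n+1)).2 x := by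
        have hcmp := comparison ω μ hω_nonneg hμ hKpos ((sq (n+2)).2 - (sq (n+1)).2) ?_
        · intro x
          have := hcmp x
          simp only [Pi.sub_apply] at this
          linarith
        · intro x
          rw [graphLap_sub]
          have hA := hEq2 (n+1) x
          rw [show (n+1+1) = n+2 from rfl] at hA
          have hB := hEq2 n x
          have hkey := key_ineq hHc hHpos hHmono hGpos hGmono
            (lam1 := lam) (lam2 := lam) (K := K)
            hlam le_rfl hKge'
            (show v₀ x + (sq (n+1)).2 x ≤ v₀ x + (sq n).2 x by linarith [ihv x])
            (ihsv x)
            (show u₀ x + (sq (n+1)).1 x ≤ u₀ x + (sq n).1 x by linarith [ihu x])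
            (ihsu x)
          simp only [Pi.sub_apply]
          linarith [hA, hB, hkey]
      exact ⟨hdec1, hdec2, hsu', hsv'⟩
  -- Comparison: any solution with parameter `lam1 ≤ lam` stays below the iteration
  have hComp : ∀ lam1 : ℝ, 0 < lam1 → lam1 ≤ lam → ∀ a b : V → ℝ,
      isSolution ω μ G H N1 N2 u₀ v₀ lam1 a b →
      ∀ n, (∀ x, a x ≤ (sq n).1 x) ∧ (∀ x, b x ≤ (sq n).2 x) := by
    intro lam1 hlam1 hlam1le a b hsolab
    have hshiftab := sol_shift_nonpos ω μ hω_nonneg hμ hGc hGpos hGmono hHc hHpos hHmono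
      hu₀ hv₀ hlam1 hsolab
    intro n
    induction n with
    | zero =>
      constructor
      · intro x
        have := hshiftab.1 x
        rw [hsq0]
        simp only [Pi.neg_apply]
        linarith
      · intro x
        have := hshiftab.2 x
        rw [hsq0]
        simp only [Pi.neg_apply]
        linarith
    | succ n ih =>
      obtain ⟨iha, ihb⟩ := ih
      obtain ⟨_, _, hsqu, hsqv⟩ := hMon n
      constructor
      · intro x
        have hcmp := comparison ω μ hω_nonneg hμ hKpos (a - (sq (n+1)).1) ?_
        · have := hcmp x
          simp only [Pi.sub_apply] at this
          linarith
        · intro y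
          rw [graphLap_sub]
          have hA := (hsolab y).1
          have hB := hEq1 n y
          have hkey := key_ineq hGc hGpos hGmono hHpos hHmono
            (lam1 := lam1) (lam2 := lam) (K := K)
            hlam1 hlam1le hKge
            (show u₀ y + a y ≤ u₀ y + (sq n).1 y by linarith [iha y])
            (hsqu y)
            (show v₀ y + b y ≤ v₀ y + (sq n).2 y by linarith [ihb y])
            (hsqv y)
          simp only [Pi.sub_apply]
          linarith [hA, hB, hkey]
      · intro x
        have hcmp := comparison ω μ hω_nonneg hμ hKpos (b - (sq (n+1)).2) ?_
        · have := hcmp x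
          simp only [Pi.sub_apply] at this
          linarith
        · intro y
          rw [graphLap_sub]
          have hA := (hsolab y).2
          have hB := hEq2 n y
          have hkey := key_ineq hHc hHpos hHmono hGpos hGmono
            (lam1 := lam1) (lam2 := lam) (K := K)
            hlam1 hlam1le hKge'
            (show v₀ y + b y ≤ v₀ y + (sq n).2 y by linarith [ihb y])
            (hsqv y)
            (show u₀ y + a y ≤ u₀ y + (sq n).1 y by linarith [iha y])
            (hsqu y)
          simp only [Pi.sub_apply]
          linarith [hA, hB, hkey]
  -- the limit
  have hbddu : ∀ x, BddBelow (Set.range fun n => (sq n).1 x) := by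
    intro x
    refine ⟨a0 x, ?_⟩
    rintro r ⟨n, rfl⟩
    exact (hComp lam0 hlam0pos hlam0lt.le a0 b0 hsol0 n).1 x
  have hbddv : ∀ x, BddBelow (Set.range fun n => (sq n).2 x) := by
    intro x
    refine ⟨b0 x, ?_⟩
    rintro r ⟨n, rfl⟩
    exact (hComp lam0 hlam0pos hlam0lt.le a0 b0 hsol0 n).2 x
  have hantiu : ∀ x, Antitone fun n => (sq n).1 x := by
    intro x
    apply antitone_nat_of_succ_le
    intro n
    exact (hMon n).1 x
  have hantiv : ∀ x, Antitone fun n => (sq n).2 x := by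
    intro x
    apply antitone_nat_of_succ_le
    intro n
    exact (hMon n).2.1 x
  obtain ⟨uM, huMdef⟩ : ∃ f : V → ℝ, ∀ x, f x = ⨅ n, (sq n).1 x := ⟨_, fun _ => rfl⟩
  obtain ⟨vM, hvMdef⟩ : ∃ f : V → ℝ, ∀ x, f x = ⨅ n, (sq n).2 x := ⟨_, fun _ => rfl⟩
  have htendu : ∀ x, Filter.Tendsto (fun n => (sq n).1 x) Filter.atTop (nhds (uM x)) := by
    intro x
    rw [huMdef x]
    exact tendsto_atTop_ciInf (hantiu x) (hbddu x)
  have htendv : ∀ x, Filter.Tendsto (fun n => (sq n).2 x) Filter.atTop (nhds (vM x)) := by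
    intro x
    rw [hvMdef x]
    exact tendsto_atTop_ciInf (hantiv x) (hbddv x)
  have huMle : ∀ n x, uM x ≤ (sq n).1 x := by
    intro n x
    rw [huMdef x]
    exact ciInf_le (hbddu x) n
  have hvMle : ∀ n x, vM x ≤ (sq n).2 x := by
    intro n x
    rw [hvMdef x]
    exact ciInf_le (hbddv x) n
  have huMshift : ∀ x, u₀ x + uM x ≤ 0 := by
    intro x
    have := huMle 0 x
    have h0 := (hMon 0).2.2.1 x
    linarith
  have hvMshift : ∀ x, v₀ x + vM x ≤ 0 := by
    intro x
    have := hvMle 0 x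
    have h0 := (hMon 0).2.2.2 x
    linarith
  have htu1 : ∀ y, Filter.Tendsto (fun n => (sq (n+1)).1 y) Filter.atTop (nhds (uM y)) :=
    fun y => (htendu y).comp (Filter.tendsto_add_atTop_nat 1)
  have htv1 : ∀ y, Filter.Tendsto (fun n => (sq (n+1)).2 y) Filter.atTop (nhds (vM y)) :=
    fun y => (htendv y).comp (Filter.tendsto_add_atTop_nat 1)
  -- convergence of the nonlinear terms
  have hgG : ∀ x, Filter.Tendsto (fun n => primFun G (Real.exp (u₀ x + (sq n).1 x)))
      Filter.atTop (nhds (primFun G (Real.exp (u₀ x + uM x)))) := by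
    intro x
    have het : Filter.Tendsto (fun n => Real.exp (u₀ x + (sq n).1 x)) Filter.atTop
        (nhds (Real.exp (u₀ x + uM x))) :=
      (Real.continuous_exp.tendsto _).comp (Filter.Tendsto.const_add (u₀ x) (htendu x))
    have hb1 : ∀ n : ℕ, primFun G (Real.exp (u₀ x + uM x))
        - G 1 * (Real.exp (u₀ x + (sq n).1 x) - Real.exp (u₀ x + uM x))
        ≤ primFun G (Real.exp (u₀ x + (sq n).1 x)) := by
      intro n
      have h := primFun_diff_bounds hGc hGpos hGmono (Real.exp_nonneg (u₀ x + uM x))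
        (Real.exp_le_exp.mpr (by linarith [huMle n x]))
        (Real.exp_le_one_iff.mpr ((hMon n).2.2.1 x))
      linarith [h.2]
    have hb2 : ∀ n : ℕ, primFun G (Real.exp (u₀ x + (sq n).1 x))
        ≤ primFun G (Real.exp (u₀ x + uM x)) := by
      intro n
      have h := primFun_diff_bounds hGc hGpos hGmono (Real.exp_nonneg (u₀ x + uM x))
        (Real.exp_le_exp.mpr (by linarith [huMle n x]))
        (Real.exp_le_one_iff.mpr ((hMon n).2.2.1 x))
      linarith [h.1]
    have hlow : Filter.Tendsto (fun n => primFun G (Real.exp (u₀ x + uM x))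
        - G 1 * (Real.exp (u₀ x + (sq n).1 x) - Real.exp (u₀ x + uM x)))
        Filter.atTop (nhds (primFun G (Real.exp (u₀ x + uM x)))) := by
      have h1 := Filter.Tendsto.const_mul (G 1)
        ((het.sub (tendsto_const_nhds (x := Real.exp (u₀ x + uM x)))))
      have h2 := Filter.Tendsto.const_sub (primFun G (Real.exp (u₀ x + uM x))) h1
      simpa using h2
    exact tendsto_of_tendsto_of_tendsto_of_le_of_le hlow tendsto_const_nhds hb1 hb2
  have hgH : ∀ x, Filter.Tendsto (fun n => primFun H (Real.exp (v₀ x + (sq n).2 x)))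
      Filter.atTop (nhds (primFun H (Real.exp (v₀ x + vM x)))) := by
    intro x
    have het : Filter.Tendsto (fun n => Real.exp (v₀ x + (sq n).2 x)) Filter.atTop
        (nhds (Real.exp (v₀ x + vM x))) :=
      (Real.continuous_exp.tendsto _).comp (Filter.Tendsto.const_add (v₀ x) (htendv x))
    have hb1 : ∀ n : ℕ, primFun H (Real.exp (v₀ x + vM x))
        - H 1 * (Real.exp (v₀ x + (sq n).2 x) - Real.exp (v₀ x + vM x))
        ≤ primFun H (Real.exp (v₀ x + (sq n).2 x)) := by
      intro n
      have h := primFun_diff_bounds hHc hHpos hHmono (Real.exp_nonneg (v₀ x + vM x))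
        (Real.exp_le_exp.mpr (by linarith [hvMle n x]))
        (Real.exp_le_one_iff.mpr ((hMon n).2.2.2 x))
      linarith [h.2]
    have hb2 : ∀ n : ℕ, primFun H (Real.exp (v₀ x + (sq n).2 x))
        ≤ primFun H (Real.exp (v₀ x + vM x)) := by
      intro n
      have h := primFun_diff_bounds hHc hHpos hHmono (Real.exp_nonneg (v₀ x + vM x))
        (Real.exp_le_exp.mpr (by linarith [hvMle n x]))
        (Real.exp_le_one_iff.mpr ((hMon n).2.2.2 x))
      linarith [h.1]
    have hlow : Filter.Tendsto (fun n => primFun H (Real.exp (v₀ x + vM x))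
        - H 1 * (Real.exp (v₀ x + (sq n).2 x) - Real.exp (v₀ x + vM x)))
        Filter.atTop (nhds (primFun H (Real.exp (v₀ x + vM x)))) := by
      have h1 := Filter.Tendsto.const_mul (H 1)
        ((het.sub (tendsto_const_nhds (x := Real.exp (v₀ x + vM x)))))
      have h2 := Filter.Tendsto.const_sub (primFun H (Real.exp (v₀ x + vM x))) h1
      simpa using h2
    exact tendsto_of_tendsto_of_tendsto_of_le_of_le hlow tendsto_const_nhds hb1 hb2
  -- the limit is a solution
  have hsolM : isSolution ω μ G H N1 N2 u₀ v₀ lam uM vM := by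
    intro x
    have hLapu : Filter.Tendsto (fun n => graphLap ω μ (sq (n+1)).1 x) Filter.atTop
        (nhds (graphLap ω μ uM x)) := by
      have hsum : Filter.Tendsto
          (fun n => ∑ y, ω x y * ((sq (n+1)).1 y - (sq (n+1)).1 x)) Filter.atTop
          (nhds (∑ y, ω x y * (uM y - uM x))) :=
        tendsto_finset_sum _ (fun y _ => Filter.Tendsto.const_mul (ω x y)
          ((htu1 y).sub (htu1 x)))
      exact Filter.Tendsto.const_mul (1 / μ x) hsum
    have hLapv : Filter.Tendsto (fun n => graphLap ω μ (sq (n+1)).2 x) Filter.atTop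
        (nhds (graphLap ω μ vM x)) := by
      have hsum : Filter.Tendsto
          (fun n => ∑ y, ω x y * ((sq (n+1)).2 y - (sq (n+1)).2 x)) Filter.atTop
          (nhds (∑ y, ω x y * (vM y - vM x))) :=
        tendsto_finset_sum _ (fun y _ => Filter.Tendsto.const_mul (ω x y)
          ((htv1 y).sub (htv1 x)))
      exact Filter.Tendsto.const_mul (1 / μ x) hsum
    have heexpv : Filter.Tendsto (fun n => Real.exp (v₀ x + (sq n).2 x)) Filter.atTop
        (nhds (Real.exp (v₀ x + vM x))) :=
      (Real.continuous_exp.tendsto _).comp (Filter.Tendsto.const_add (v₀ x) (htendv x))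
    have heexpu : Filter.Tendsto (fun n => Real.exp (u₀ x + (sq n).1 x)) Filter.atTop
        (nhds (Real.exp (u₀ x + uM x))) :=
      (Real.continuous_exp.tendsto _).comp (Filter.Tendsto.const_add (u₀ x) (htendu x))
    have hHt : Filter.Tendsto (fun n => H (Real.exp (v₀ x + (sq n).2 x))) Filter.atTop
        (nhds (H (Real.exp (v₀ x + vM x)))) := by
      have hca : ContinuousAt H (Real.exp (v₀ x + vM x)) :=
        hHc.continuousAt (Ici_mem_nhds (Real.exp_pos _))
      exact hca.tendsto.comp heexpv
    have hGt : Filter.Tendsto (fun n => G (Real.exp (u₀ x + (sq n).1 x))) Filter.atTop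
        (nhds (G (Real.exp (u₀ x + uM x)))) := by
      have hca : ContinuousAt G (Real.exp (u₀ x + uM x)) :=
        hGc.continuousAt (Ici_mem_nhds (Real.exp_pos _))
      exact hca.tendsto.comp heexpu
    constructor
    · -- first equation
      have hL : Filter.Tendsto
          (fun n => graphLap ω μ (sq (n+1)).1 x - K * (sq (n+1)).1 x) Filter.atTop
          (nhds (graphLap ω μ uM x - K * uM x)) :=
        hLapu.sub (Filter.Tendsto.const_mul K (htu1 x))
      have hR : Filter.Tendsto
          (fun n => -lam * Real.exp (v₀ x + (sq n).2 x) * H (Real.exp (v₀ x + (sq n).2 x)) *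
            primFun G (Real.exp (u₀ x + (sq n).1 x)) + 4 * Real.pi * N1 / graphVol μ
            - K * (sq n).1 x) Filter.atTop
          (nhds (-lam * Real.exp (v₀ x + vM x) * H (Real.exp (v₀ x + vM x)) *
            primFun G (Real.exp (u₀ x + uM x)) + 4 * Real.pi * N1 / graphVol μ
            - K * uM x)) := by
        exact (((((Filter.Tendsto.const_mul (-lam) heexpv).mul hHt).mul (hgG x)).add_const
          (4 * Real.pi * N1 / graphVol μ)).sub (Filter.Tendsto.const_mul K (htendu x)))
      have heq := tendsto_nhds_unique (Filter.Tendsto.congr (fun n => hEq1 n x) hL) hR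
      linarith [heq]
    · -- second equation
      have hL : Filter.Tendsto
          (fun n => graphLap ω μ (sq (n+1)).2 x - K * (sq (n+1)).2 x) Filter.atTop
          (nhds (graphLap ω μ vM x - K * vM x)) :=
        hLapv.sub (Filter.Tendsto.const_mul K (htv1 x))
      have hR : Filter.Tendsto
          (fun n => -lam * Real.exp (u₀ x + (sq n).1 x) * G (Real.exp (u₀ x + (sq n).1 x)) *
            primFun H (Real.exp (v₀ x + (sq n).2 x)) + 4 * Real.pi * N2 / graphVol μ
            - K * (sq n).2 x) Filter.atTop
          (nhds (-lam * Real.exp (u₀ x + uM x) * G (Real.exp (u₀ x + uM x)) *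
            primFun H (Real.exp (v₀ x + vM x)) + 4 * Real.pi * N2 / graphVol μ
            - K * vM x)) := by
        exact (((((Filter.Tendsto.const_mul (-lam) heexpu).mul hGt).mul (hgH x)).add_const
          (4 * Real.pi * N2 / graphVol μ)).sub (Filter.Tendsto.const_mul K (htendv x)))
      have heq := tendsto_nhds_unique (Filter.Tendsto.congr (fun n => hEq2 n x) hL) hR
      linarith [heq]
  -- maximality with strict inequality
  have huMshift : ∀ x, u₀ x + uM x ≤ 0 := huMshift
  have hmax : ∀ u' v', isSolution ω μ G H N1 N2 u₀ v₀ lam u' v' → (u', v') ≠ (uM, vM) →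
      ∀ x, u' x < uM x ∧ v' x < vM x := by
    intro u' v' hsol' hne'
    have hle_u : ∀ x, u' x ≤ uM x := by
      intro x
      rw [huMdef x]
      exact le_ciInf (fun n => (hComp lam hlam le_rfl u' v' hsol' n).1 x)
    have hle_v : ∀ x, v' x ≤ vM x := by
      intro x
      rw [hvMdef x]
      exact le_ciInf (fun n => (hComp lam hlam le_rfl u' v' hsol' n).2 x)
    have hwle_u : ∀ z, (u' - uM) z ≤ 0 := by
      intro z; simp only [Pi.sub_apply]; linarith [hle_u z]
    have hwle_v : ∀ z, (v' - vM) z ≤ 0 := by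
      intro z; simp only [Pi.sub_apply]; linarith [hle_v z]
    -- propagation for the u-component
    have hpropu : (∃ x, u' x = uM x) → ∀ x, u' x = uM x := by
      rintro ⟨x0, hx0⟩
      have hz : ∀ x, (u' - uM) x = 0 → ∀ y, 0 < ω x y → (u' - uM) y = 0 := by
        intro x hx
        apply neighbors_zero ω μ hω_nonneg hμ (u' - uM) hwle_u x hx
        have hxeq : u' x = uM x := by
          simp only [Pi.sub_apply] at hx; linarith
        rw [graphLap_sub]
        have hA := (hsol' x).1
        have hB := (hsolM x).1
        rw [hxeq] at hA
        have hphi := phi_mono hHpos hHmono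
          (show v₀ x + v' x ≤ v₀ x + vM x by linarith [hle_v x])
        have hga : 0 ≤ primFun G (Real.exp (u₀ x + uM x)) :=
          primFun_nonneg hGc hGpos hGmono (Real.exp_nonneg _)
            (Real.exp_le_one_iff.mpr (huMshift x))
        have hkey : 0 ≤ lam * (Real.exp (v₀ x + vM x) * H (Real.exp (v₀ x + vM x))
            - Real.exp (v₀ x + v' x) * H (Real.exp (v₀ x + v' x)))
            * primFun G (Real.exp (u₀ x + uM x)) :=
          mul_nonneg (mul_nonneg hlam.le (by linarith)) hga
        rw [hA, hB]
        linarith [hkey]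
      have hall := propagate_zero ω hconn (u' - uM) hz
        (x0 := x0) (by simp only [Pi.sub_apply]; linarith)
      intro x
      have := hall x
      simp only [Pi.sub_apply] at this
      linarith
    -- propagation for the v-component
    have hpropv : (∃ x, v' x = vM x) → ∀ x, v' x = vM x := by
      rintro ⟨x0, hx0⟩
      have hz : ∀ x, (v' - vM) x = 0 → ∀ y, 0 < ω x y → (v' - vM) y = 0 := by
        intro x hx
        apply neighbors_zero ω μ hω_nonneg hμ (v' - vM) hwle_v x hx
        have hxeq : v' x = vM x := by
          simp only [Pi.sub_apply] at hx; linarith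
        rw [graphLap_sub]
        have hA := (hsol' x).2
        have hB := (hsolM x).2
        rw [hxeq] at hA
        have hphi := phi_mono hGpos hGmono
          (show u₀ x + u' x ≤ u₀ x + uM x by linarith [hle_u x])
        have hga : 0 ≤ primFun H (Real.exp (v₀ x + vM x)) :=
          primFun_nonneg hHc hHpos hHmono (Real.exp_nonneg _)
            (Real.exp_le_one_iff.mpr (hvMshift x))
        have hkey : 0 ≤ lam * (Real.exp (u₀ x + uM x) * G (Real.exp (u₀ x + uM x))
            - Real.exp (u₀ x + u' x) * G (Real.exp (u₀ x + u' x)))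
            * primFun H (Real.exp (v₀ x + vM x)) :=
          mul_nonneg (mul_nonneg hlam.le (by linarith)) hga
        rw [hA, hB]
        linarith [hkey]
      have hall := propagate_zero ω hconn (v' - vM) hz
        (x0 := x0) (by simp only [Pi.sub_apply]; linarith)
      intro x
      have := hall x
      simp only [Pi.sub_apply] at this
      linarith
    -- if u' = uM then v' = vM
    have hCu : (∀ x, u' x = uM x) → ∀ x, v' x = vM x := by
      intro hueq
      obtain ⟨xs, hxs⟩ := (exists_pos_pts ω μ hω_symm hμ hGpos hHpos hN1 hN2 hlam hsol').1
      have hfun : u' = uM := funext hueq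
      have hA := (hsol' xs).1
      have hB := (hsolM xs).1
      rw [hfun] at hA
      have heq : Real.exp (v₀ xs + v' xs) * H (Real.exp (v₀ xs + v' xs))
          = Real.exp (v₀ xs + vM xs) * H (Real.exp (v₀ xs + vM xs)) := by
        rw [hfun] at hxs
        have h2 : lam * (Real.exp (v₀ xs + v' xs) * H (Real.exp (v₀ xs + v' xs))
            - Real.exp (v₀ xs + vM xs) * H (Real.exp (v₀ xs + vM xs)))
            * primFun G (Real.exp (u₀ xs + uM xs)) = 0 := by
          linear_combination hA - hB
        rcases mul_eq_zero.mp h2 with h | h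
        · rcases mul_eq_zero.mp h with h' | h'
          · exact absurd h' (ne_of_gt hlam)
          · linarith
        · exact absurd h (ne_of_gt hxs)
      have hvs : v' xs = vM xs := by
        by_contra hcon
        have hlt : v' xs < vM xs := lt_of_le_of_ne (hle_v xs) hcon
        have := phi_strict hHpos hHmono
          (show v₀ xs + v' xs < v₀ xs + vM xs by linarith)
        linarith [heq, this]
      exact hpropv ⟨xs, hvs⟩
    -- if v' = vM then u' = uM
    have hCv : (∀ x, v' x = vM x) → ∀ x, u' x = uM x := by
      intro hveq
      obtain ⟨xs, hxs⟩ := (exists_pos_pts ω μ hω_symm hμ hGpos hHpos hN1 hN2 hlam hsol').2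
      have hfun : v' = vM := funext hveq
      have hA := (hsol' xs).2
      have hB := (hsolM xs).2
      rw [hfun] at hA
      have heq : Real.exp (u₀ xs + u' xs) * G (Real.exp (u₀ xs + u' xs))
          = Real.exp (u₀ xs + uM xs) * G (Real.exp (u₀ xs + uM xs)) := by
        rw [hfun] at hxs
        have h2 : lam * (Real.exp (u₀ xs + u' xs) * G (Real.exp (u₀ xs + u' xs))
            - Real.exp (u₀ xs + uM xs) * G (Real.exp (u₀ xs + uM xs)))
            * primFun H (Real.exp (v₀ xs + vM xs)) = 0 := by
          linear_combination hA - hB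
        rcases mul_eq_zero.mp h2 with h | h
        · rcases mul_eq_zero.mp h with h' | h'
          · exact absurd h' (ne_of_gt hlam)
          · linarith
        · exact absurd h (ne_of_gt hxs)
      have hus : u' xs = uM xs := by
        by_contra hcon
        have hlt : u' xs < uM xs := lt_of_le_of_ne (hle_u xs) hcon
        have := phi_strict hGpos hGmono
          (show u₀ xs + u' xs < u₀ xs + uM xs by linarith)
        linarith [heq, this]
      exact hpropu ⟨xs, hus⟩
    intro x
    constructor
    · rcases lt_or_eq_of_le (hle_u x) with h | h
      · exact h
      · exfalso
        have hueq := hpropu ⟨x, h⟩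
        have hveq := hCu hueq
        exact hne' (Prod.ext (funext hueq) (funext hveq))
    · rcases lt_or_eq_of_le (hle_v x) with h | h
      · exact h
      · exfalso
        have hveq := hpropv ⟨x, h⟩
        have hueq := hCv hveq
        exact hne' (Prod.ext (funext hueq) (funext hveq))
  refine ⟨(uM, vM), ⟨hsolM, hmax⟩, ?_⟩
  rintro ⟨q1, q2⟩ ⟨hqsol, hqmax⟩
  by_cases hq : (q1, q2) = (uM, vM)
  · exact hq
  · exfalso
    obtain ⟨x⟩ := hNV
    have h1 := (hmax q1 q2 hqsol hq x).1
    have hq' : (uM, vM) ≠ (q1, q2) := fun h => hq h.symm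
    have h2 := (hqmax uM vM hsolM hq' x).1
    linarith
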